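/- arXiv:1610.09270 — 12 statements merged into one kernel-verified Lean document; each statement's English description precedes it below -/
import Mathlib

section
/- Suppose the ternary relation R on subsets of α has monotonicity. Then the relation Rᶜ is countably based, and Rᶜ agrees with R on countable sets (for all countable A, B, C: A (Rᶜ)_C B if and only if A (R)_C B); moreover, Rᶜ is the unique such relation: any countably based ternary relation that agrees with R on all countable sets is equal to Rᶜ. -/
/-- `R A C B` means `A ⫝_C B`.  Monotonicity of a ternary relation. -/
def Mono {α : Type*} (R : Set α → Set α → Set α → Prop) : Prop :=
  ∀ A C B A' B' : Set α, R A C B → A' ⊆ A → B' ⊆ B → R A' C B'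

/-- `R` is countably based. -/
def CountablyBased {α : Type*} (R : Set α → Set α → Set α → Prop) : Prop :=
  ∀ A C B : Set α, R A C B ↔
    ∀ A' B' C' : Set α, A'.Countable → B'.Countable → C'.Countable →
      A' ⊆ A → B' ⊆ B → C' ⊆ C →
      ∃ D : Set α, D.Countable ∧ C' ⊆ D ∧ D ⊆ C ∧ R A' D B'

/-- The relation `Rᶜ` obtained from `R`. -/
def cBase {α : Type*} (R : Set α → Set α → Set α → Prop) (A C B : Set α) : Prop :=
  ∀ A' B' C' : Set α, A'.Countable → B'.Countable → C'.Countable →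
    A' ⊆ A → B' ⊆ B → C' ⊆ C →
    ∃ D : Set α, D.Countable ∧ C' ⊆ D ∧ D ⊆ C ∧ R A' D B'

theorem stmt1 {α : Type*} (R : Set α → Set α → Set α → Prop) (hmono : Mono R) :
    CountablyBased (cBase R) ∧
    (∀ A C B : Set α, A.Countable → B.Countable → C.Countable → (cBase R A C B ↔ R A C B)) ∧
    (∀ S : Set α → Set α → Set α → Prop, CountablyBased S →
      (∀ A C B : Set α, A.Countable → B.Countable → C.Countable → (S A C B ↔ R A C B)) →
      S = cBase R) := by
  have agree : ∀ A C B : Set α, A.Countable → B.Countable → C.Countable →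
      (cBase R A C B ↔ R A C B) := by
    intro A C B hA hB hC
    constructor
    · intro h
      obtain ⟨D, _, hCD, hDC, hR⟩ := h A B C hA hB hC subset_rfl subset_rfl subset_rfl
      rwa [hDC.antisymm hCD] at hR
    · intro h A' B' C' _ _ _ hA' hB' hC'
      exact ⟨C, hC, hC', subset_rfl, hmono A C B A' B' h hA' hB'⟩
  refine ⟨?_, agree, ?_⟩
  · intro A C B
    constructor
    · intro h A' B' C' hA' hB' hC' hAs hBs hCs
      obtain ⟨D, hD, hCD, hDC, hR⟩ := h A' B' C' hA' hB' hC' hAs hBs hCs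
      exact ⟨D, hD, hCD, hDC, (agree A' D B' hA' hB' hD).mpr hR⟩
    · intro h A' B' C' hA' hB' hC' hAs hBs hCs
      obtain ⟨D, hD, hCD, hDC, hcb⟩ := h A' B' C' hA' hB' hC' hAs hBs hCs
      obtain ⟨D', _, hDD', hD'D, hR⟩ :=
        hcb A' B' D hA' hB' hD subset_rfl subset_rfl subset_rfl
      rw [hD'D.antisymm hDD'] at hR
      exact ⟨D, hD, hCD, hDC, hR⟩
  · intro S hSb hSag
    funext A C B
    apply propext
    rw [hSb A C B]
    constructor
    · intro h A' B' C' hA' hB' hC' hAs hBs hCs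
      obtain ⟨D, hD, hCD, hDC, hS⟩ := h A' B' C' hA' hB' hC' hAs hBs hCs
      exact ⟨D, hD, hCD, hDC, (hSag A' D B' hA' hB' hD).mp hS⟩
    · intro h A' B' C' hA' hB' hC' hAs hBs hCs
      obtain ⟨D, hD, hCD, hDC, hR⟩ := h A' B' C' hA' hB' hC' hAs hBs hCs
      exact ⟨D, hD, hCD, hDC, (hSag A' D B' hA' hB' hD).mpr hR⟩
end

section
/- A ternary relation R on subsets of α is countably based if and only if R has monotonicity and two-sided countable character, and for all countable A, B and every set C: A ⫝_C B holds if and only if for every countable C' ⊆ C there is a countable D with C' ⊆ D ⊆ C and A ⫝_D B. -/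
/-- Two-sided countable character. -/
def TwoSidedCountableChar {α : Type*} (R : Set α → Set α → Set α → Prop) : Prop :=
  ∀ A C B : Set α,
    (∀ A₀ B₀ : Set α, A₀.Countable → B₀.Countable → A₀ ⊆ A → B₀ ⊆ B → R A₀ C B₀) →
    R A C B

theorem stmt2 {α : Type*} (R : Set α → Set α → Set α → Prop) :
    CountablyBased R ↔
      (Mono R ∧ TwoSidedCountableChar R ∧
        ∀ A B : Set α, A.Countable → B.Countable → ∀ C : Set α,
          (R A C B ↔ ∀ C' : Set α, C'.Countable → C' ⊆ C →
            ∃ D : Set α, D.Countable ∧ C' ⊆ D ∧ D ⊆ C ∧ R A D B)) := by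
  constructor
  · intro cb
    have mono : Mono R := by
      intro A C B A' B' h hA hB
      rw [cb]
      intro A'' B'' C'' hA'' hB'' hC'' hA''s hB''s hC''s
      exact (cb A C B).mp h A'' B'' C'' hA'' hB'' hC''
        (hA''s.trans hA) (hB''s.trans hB) hC''s
    refine ⟨mono, ?_, ?_⟩
    · intro A C B h
      rw [cb]
      intro A' B' C' hA' hB' hC' hA's hB's hC's
      have := h A' B' hA' hB' hA's hB's
      exact (cb A' C B').mp this A' B' C' hA' hB' hC'
        subset_rfl subset_rfl hC's
    · intro A B hA hB C
      constructor
      · intro h C' hC' hC's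
        exact (cb A C B).mp h A B C' hA hB hC' subset_rfl subset_rfl hC's
      · intro h
        rw [cb]
        intro A' B' C' hA' hB' hC' hA's hB's hC's
        obtain ⟨D, hD, hCD, hDC, hR⟩ := h C' hC' hC's
        exact ⟨D, hD, hCD, hDC, mono A D B A' B' hR hA's hB's⟩
  · rintro ⟨mono, char, hcc⟩ A C B
    constructor
    · intro h A' B' C' hA' hB' hC' hA's hB's hC's
      have := mono A C B A' B' h hA's hB's
      exact ((hcc A' B' hA' hB' C).mp this) C' hC' hC's
    · intro h
      apply char
      intro A₀ B₀ hA₀ hB₀ hA₀s hB₀s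
      apply (hcc A₀ B₀ hA₀ hB₀ C).mpr
      intro C' hC' hC's
      exact h A₀ B₀ C' hA₀ hB₀ hC' hA₀s hB₀s hC's
end

section
/- Suppose R and S are ternary relations on subsets of α that are both countably based and both have the countable union property. Then the conjunction relation R ∧ S (defined by A (R∧S)_C B iff A (R)_C B and A (S)_C B) is also countably based. -/
/-- The countable union property. -/
def CountableUnionProperty {α : Type*} (R : Set α → Set α → Set α → Prop) : Prop :=
  ∀ A B : Set α, A.Countable → B.Countable →
    ∀ C : ℕ → Set α, (⋃ n, C n).Countable → (∀ n, C n ⊆ C (n + 1)) →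
      (∀ n, R A (C n) B) → R A (⋃ n, C n) B

theorem stmt7 {α : Type*} (R S : Set α → Set α → Set α → Prop)
    (hRcb : CountablyBased R) (hScb : CountablyBased S)
    (hRcu : CountableUnionProperty R) (hScu : CountableUnionProperty S) :
    CountablyBased (fun A C B => R A C B ∧ S A C B) := by
  intro A C B
  constructor
  · rintro ⟨hR, hS⟩ A' B' C' hA'c hB'c hC'c hA' hB' hC'
    have stepR : ∀ E : {E : Set α // E.Countable ∧ E ⊆ C},
        ∃ F : {E : Set α // E.Countable ∧ E ⊆ C}, E.1 ⊆ F.1 ∧ R A' F.1 B' := by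
      rintro ⟨E, hEc, hEC⟩
      obtain ⟨D, hDc, hED, hDC, hRD⟩ :=
        (hRcb A C B).mp hR A' B' E hA'c hB'c hEc hA' hB' hEC
      exact ⟨⟨D, hDc, hDC⟩, hED, hRD⟩
    have stepS : ∀ E : {E : Set α // E.Countable ∧ E ⊆ C},
        ∃ F : {E : Set α // E.Countable ∧ E ⊆ C}, E.1 ⊆ F.1 ∧ S A' F.1 B' := by
      rintro ⟨E, hEc, hEC⟩
      obtain ⟨D, hDc, hED, hDC, hSD⟩ :=
        (hScb A C B).mp hS A' B' E hA'c hB'c hEc hA' hB' hEC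
      exact ⟨⟨D, hDc, hDC⟩, hED, hSD⟩
    choose fR hfR hfR' using stepR
    choose fS hfS hfS' using stepS
    set D : ℕ → {E : Set α // E.Countable ∧ E ⊆ C} :=
      fun n => Nat.rec ⟨C', hC'c, hC'⟩
        (fun n prev => if n % 2 = 0 then fR prev else fS prev) n with hD
    have hstep : ∀ n, (D n).1 ⊆ (D (n + 1)).1 := by
      intro n
      show (D n).1 ⊆ (if n % 2 = 0 then fR (D n) else fS (D n)).1
      by_cases h : n % 2 = 0
      · simp [h]; exact hfR (D n)
      · simp [h]; exact hfS (D n)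
    have hmono : ∀ m n, m ≤ n → (D m).1 ⊆ (D n).1 := by
      intro m n hmn
      induction hmn with
      | refl => exact subset_rfl
      | step _ ih => exact ih.trans (hstep _)
    have hRodd : ∀ n, R A' (D (2 * n + 1)).1 B' := by
      intro n
      have : D (2 * n + 1) = fR (D (2 * n)) := by
        show (if (2 * n) % 2 = 0 then fR (D (2 * n)) else fS (D (2 * n))) = _
        simp [Nat.mul_mod_right]
      rw [this]; exact hfR' _
    have hSeven : ∀ n, S A' (D (2 * n + 2)).1 B' := by
      intro n
      have : D (2 * n + 2) = fS (D (2 * n + 1)) := by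
        show (if (2 * n + 1) % 2 = 0 then fR (D (2 * n + 1)) else fS (D (2 * n + 1))) = _
        rw [if_neg (by omega)]
      rw [this]; exact hfS' _
    refine ⟨⋃ n, (D n).1, Set.countable_iUnion (fun n => (D n).2.1),
      Set.subset_iUnion (fun n => (D n).1) 0, Set.iUnion_subset (fun n => (D n).2.2), ?_, ?_⟩
    · have h1 : (⋃ n, (D (2 * n + 1)).1) = ⋃ n, (D n).1 := by
        apply Set.Subset.antisymm
        · exact Set.iUnion_subset fun n => Set.subset_iUnion (fun n => (D n).1) (2 * n + 1)
        · exact Set.iUnion_subset fun n =>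
            (hmono n (2 * n + 1) (by omega)).trans
              (Set.subset_iUnion (fun n => (D (2 * n + 1)).1) n)
      rw [← h1]
      exact hRcu A' B' hA'c hB'c (fun n => (D (2 * n + 1)).1)
        (Set.countable_iUnion (fun n => (D (2 * n + 1)).2.1))
        (fun n => hmono (2 * n + 1) (2 * (n + 1) + 1) (by omega)) hRodd
    · have h1 : (⋃ n, (D (2 * n + 2)).1) = ⋃ n, (D n).1 := by
        apply Set.Subset.antisymm
        · exact Set.iUnion_subset fun n => Set.subset_iUnion (fun n => (D n).1) (2 * n + 2)
        · exact Set.iUnion_subset fun n =>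
            (hmono n (2 * n + 2) (by omega)).trans
              (Set.subset_iUnion (fun n => (D (2 * n + 2)).1) n)
      rw [← h1]
      exact hScu A' B' hA'c hB'c (fun n => (D (2 * n + 2)).1)
        (Set.countable_iUnion (fun n => (D (2 * n + 2)).2.1))
        (fun n => hmono (2 * n + 2) (2 * (n + 1) + 2) (by omega)) hSeven
  · intro h
    constructor
    · refine (hRcb A C B).mpr fun A' B' C' hA'c hB'c hC'c hA' hB' hC' => ?_
      obtain ⟨D, hDc, hCD, hDC, hr, _⟩ := h A' B' C' hA'c hB'c hC'c hA' hB' hC'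
      exact ⟨D, hDc, hCD, hDC, hr⟩
    · refine (hScb A C B).mpr fun A' B' C' hA'c hB'c hC'c hA' hB' hC' => ?_
      obtain ⟨D, hDc, hCD, hDC, _, hs⟩ := h A' B' C' hA'c hB'c hC'c hA' hB' hC'
      exact ⟨D, hDc, hCD, hDC, hs⟩
end

section
/- Suppose the ternary relation R on subsets of α has monotonicity, finite character, and the countable union property. Then Rᶜ has finite character. -/
/-- Finite character. -/
def FinChar {α : Type*} (R : Set α → Set α → Set α → Prop) : Prop :=
  ∀ A C B : Set α, (∀ A₀ : Set α, A₀.Finite → A₀ ⊆ A → R A₀ C B) → R A C B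

/-!
Write the countable `A' ⊆ A` as an increasing union of finite sets `Aₙ`. Applying the hypothesis to
`Aₙ` and to the set built so far, one chooses countable `C' ⊆ D₀ ⊆ D₁ ⊆ ⋯ ⊆ C` with
`Aₙ ⫝_{Dₙ} B'`, and takes `D = ⋃ Dₙ`. A finite `F ⊆ A'` lies in some `A_N`, so `F ⫝_{Dₙ} B'` for
all `n ≥ N` by monotonicity, hence `F ⫝_D B'` by the countable union property applied to the tail
of the chain; finite character of `R` then gives `A' ⫝_D B'`.
-/

open Set

theorem Set.Countable.exists_monotone_finite_iUnion_eq {α : Type*} {s : Set α} (hs : s.Countable) :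
    ∃ t : ℕ → Set α, Monotone t ∧ (∀ n, (t n).Finite) ∧ ⋃ n, t n = s := by
  rcases s.eq_empty_or_nonempty with rfl | hne
  · exact ⟨fun _ => ∅, monotone_const, fun _ => finite_empty, iUnion_empty⟩
  obtain ⟨f, rfl⟩ := hs.exists_eq_range hne
  refine ⟨accumulate fun n => {f n}, monotone_accumulate, fun n => ?_, ?_⟩
  · exact (finite_le_nat n).biUnion fun _ _ => finite_singleton _
  · rw [iUnion_accumulate, iUnion_singleton_eq_range]

theorem Monotone.exists_subset_of_finite_subset_iUnion {α : Type*} {t : ℕ → Set α}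
    (ht : Monotone t) {F : Set α} (hF : F.Finite) (hFt : F ⊆ ⋃ n, t n) : ∃ n, F ⊆ t n := by
  rw [← hF.coe_toFinset] at hFt ⊢
  exact ht.directed_le.exists_mem_subset_of_finset_subset_biUnion hFt

theorem exists_monotone_seq_of_forall_exists_le {β : Type*} [Preorder β] {Q : β → Prop}
    {P : ℕ → β → Prop} (step : ∀ n x, Q x → ∃ y, Q y ∧ x ≤ y ∧ P n y) {x₀ : β} (hx₀ : Q x₀) :
    ∃ y : ℕ → β, Monotone y ∧ x₀ ≤ y 0 ∧ ∀ n, Q (y n) ∧ P n (y n) := by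
  choose! g hgQ hgle hgP using step
  let y : ℕ → β := fun n => Nat.rec (g 0 x₀) (fun n yn => g (n + 1) yn) n
  have hQ : ∀ n, Q (y n) := fun n => by
    induction n with
    | zero => exact hgQ 0 x₀ hx₀
    | succ n ih => exact hgQ (n + 1) (y n) ih
  refine ⟨y, monotone_nat_of_le_succ fun n => hgle (n + 1) (y n) (hQ n), hgle 0 x₀ hx₀,
    fun n => ⟨hQ n, ?_⟩⟩
  cases n with
  | zero => exact hgP 0 x₀ hx₀
  | succ n => exact hgP (n + 1) (y n) (hQ n)

section

variable {α : Type*} {R : Set α → Set α → Set α → Prop}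

theorem CountableUnionProperty.iUnion_of_forall_ge (hcu : CountableUnionProperty R)
    {A B : Set α} {D : ℕ → Set α} (hA : A.Countable) (hB : B.Countable) (hD : Monotone D)
    (hDc : (⋃ n, D n).Countable) {N : ℕ} (h : ∀ n ≥ N, R A (D n) B) : R A (⋃ n, D n) B := by
  rw [← hD.iUnion_nat_add N]
  refine hcu A B hA hB (fun n => D (n + N)) ?_ (fun n => hD (by omega)) fun n => h _ (by omega)
  rwa [hD.iUnion_nat_add N]

theorem FinChar.iUnion_of_monotone (hfin : FinChar R) (hmono : Mono R)
    (hcu : CountableUnionProperty R)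
    {A D : ℕ → Set α} {B : Set α} (hA : Monotone A) (hD : Monotone D) (hB : B.Countable)
    (hDc : (⋃ n, D n).Countable) (h : ∀ n, R (A n) (D n) B) : R (⋃ n, A n) (⋃ n, D n) B := by
  refine hfin _ _ _ fun F hF hFA => ?_
  obtain ⟨N, hFN⟩ := hA.exists_subset_of_finite_subset_iUnion hF hFA
  exact hcu.iUnion_of_forall_ge hF.countable hB hD hDc fun n hn =>
    hmono _ _ _ _ _ (h n) (hFN.trans (hA hn)) subset_rfl

end

theorem stmt8 {α : Type*} (R : Set α → Set α → Set α → Prop)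
    (hmono : Mono R) (hfin : FinChar R) (hcu : CountableUnionProperty R) :
    FinChar (cBase R) := by
  intro A C B h A' B' C' hA' hB' hC' hA'A hB'B hC'C
  obtain ⟨t, ht, htfin, rfl⟩ := hA'.exists_monotone_finite_iUnion_eq
  have step : ∀ n E, E.Countable ∧ E ⊆ C →
      ∃ D, (D.Countable ∧ D ⊆ C) ∧ E ⊆ D ∧ R (t n) D B' := fun n E ⟨hE, hEC⟩ => by
    obtain ⟨D, hD, hED, hDC, hR⟩ := h (t n) (htfin n) ((subset_iUnion t n).trans hA'A)
      (t n) B' E (htfin n).countable hB' hE subset_rfl hB'B hEC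
    exact ⟨D, ⟨hD, hDC⟩, hED, hR⟩
  obtain ⟨D, hD, hC'D, hDR⟩ := exists_monotone_seq_of_forall_exists_le step ⟨hC', hC'C⟩
  have hDc : (⋃ n, D n).Countable := countable_iUnion fun n => (hDR n).1.1
  exact ⟨⋃ n, D n, hDc, hC'D.trans (subset_iUnion D 0), iUnion_subset fun n => (hDR n).1.2,
    hfin.iUnion_of_monotone hmono hcu ht hD hB' hDc fun n => (hDR n).2⟩
end

section
/- Suppose the ternary relation R on subsets of α has countable character, base monotonicity, and countably local character. Then R has local character with bound ((|D| + ℵ₀)^ℵ₀)⁺: for every set D and every set B there exists C ⊆ B with cardinality #C ≤ (#D + ℵ₀)^ℵ₀ (cardinal exponentiation) such that D ⫝_C B. -/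
open Cardinal

/-- `R A C B` means `A ⫝_C B`.  Countable character. -/
def CtblChar {α : Type*} (R : Set α → Set α → Set α → Prop) : Prop :=
  ∀ A C B : Set α, (∀ A₀ : Set α, A₀.Countable → A₀ ⊆ A → R A₀ C B) → R A C B

/-- Base monotonicity. -/
def BaseMono {α : Type*} (R : Set α → Set α → Set α → Prop) : Prop :=
  ∀ A B C D : Set α, D ⊆ C → C ⊆ B → R A D B → R A C B

/-- Countably local character. -/
def CtblLocalChar {α : Type*} (R : Set α → Set α → Set α → Prop) : Prop :=
  ∀ A B : Set α, A.Countable → ∃ C : Set α, C ⊆ B ∧ C.Countable ∧ R A C B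

theorem stmt9 {α : Type*} (R : Set α → Set α → Set α → Prop)
    (hcc : CtblChar R) (hbase : BaseMono R) (hloc : CtblLocalChar R) :
    ∀ D B : Set α, ∃ C : Set α, C ⊆ B ∧
      #C ≤ (#D + ℵ₀) ^ ℵ₀ ∧ R D C B := by
  intro D B
  classical
  set S := { t : Set α // t ⊆ D ∧ #t ≤ ℵ₀ } with hS
  have hchoice : ∀ s : S, ∃ C : Set α, C ⊆ B ∧ C.Countable ∧ R s.1 C B := by
    intro s
    exact hloc s.1 B (Set.countable_coe_iff.mp (Cardinal.mk_le_aleph0_iff.mp s.2.2))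
  choose F hFB hFc hFR using hchoice
  refine ⟨⋃ s : S, F s, Set.iUnion_subset hFB, ?_, ?_⟩
  · have hSle : #S ≤ (#D + ℵ₀) ^ ℵ₀ := by
      refine (Cardinal.mk_bounded_subset_le D ℵ₀).trans ?_
      exact power_le_power_right (max_le (self_le_add_right _ _) (self_le_add_left _ _))
    have hκ : ℵ₀ ≤ (#D + ℵ₀) ^ ℵ₀ :=
      le_trans (self_le_add_left _ _) (Cardinal.self_le_power _ one_le_aleph0)
    calc #(⋃ s : S, F s) ≤ #S * ⨆ s : S, #(F s) := mk_iUnion_le _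
      _ ≤ ((#D + ℵ₀) ^ ℵ₀) * ((#D + ℵ₀) ^ ℵ₀) := by
          apply mul_le_mul' hSle
          exact le_trans (ciSup_le' fun s => Cardinal.mk_le_aleph0_iff.mpr
            (Set.countable_coe_iff.mpr (hFc s))) hκ
      _ = _ := Cardinal.mul_eq_self hκ
  · apply hcc
    intro A₀ hA₀c hA₀D
    have hs : A₀ ⊆ D ∧ #A₀ ≤ ℵ₀ :=
      ⟨hA₀D, Cardinal.mk_le_aleph0_iff.mpr (Set.countable_coe_iff.mpr hA₀c)⟩
    exact hbase A₀ B _ (F ⟨A₀, hs⟩)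
      (Set.subset_iUnion_of_subset ⟨A₀, hs⟩ (le_refl _))
      (Set.iUnion_subset hFB) (hFR ⟨A₀, hs⟩)
end

section
/- For all sets A, B, C ⊆ α: A ⫝e_C B holds if and only if for every set D with C ⊆ D ⊆ A ∪ C one has A ∩ cl(B ∪ D) ⊆ cl(D). -/
/-- Exchange independence relative to a closure operator:
`A ⫝e_C B` iff for every finite `s ⊆ A`, `A ∩ cl(s ∪ B ∪ C) ⊆ cl(s ∪ C)`. -/
def IndE {α : Type*} (cl : Set α → Set α) (A C B : Set α) : Prop :=
  ∀ s : Set α, s.Finite → s ⊆ A → A ∩ cl (s ∪ B ∪ C) ⊆ cl (s ∪ C)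

/-! Given `a ∈ A ∩ cl (B ∪ D)`, finitarity puts `a` in the closure of a finite `F ⊆ B ∪ D`;
the part `s = (F ∩ D) \ C` of `F` lies in `A`, so independence moves `a` into `cl (s ∪ C) ⊆ cl D`.
Conversely, `D = s ∪ C` recovers the definition. -/

namespace IndE

variable {α : Type*} {cl : Set α → Set α} {A B C D : Set α}

theorem inter_closure_subset (hmono : Monotone cl)
    (hfin : ∀ (X : Set α) (b : α), b ∈ cl X → ∃ F : Set α, F ⊆ X ∧ F.Finite ∧ b ∈ cl F)
    (h : IndE cl A C B) (hCD : C ⊆ D) (hDA : D ⊆ A ∪ C) :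
    A ∩ cl (B ∪ D) ⊆ cl D := by
  rintro a ⟨haA, haBD⟩
  obtain ⟨F, hFBD, hFfin, haF⟩ := hfin _ _ haBD
  have hsA : (F ∩ D) \ C ⊆ A := fun x ⟨⟨_, hxD⟩, hxC⟩ => (hDA hxD).resolve_right hxC
  have hF : F ⊆ (F ∩ D) \ C ∪ B ∪ C := by
    intro x hxF
    by_cases hxC : x ∈ C
    · exact Or.inr hxC
    · rcases hFBD hxF with hxB | hxD
      · exact Or.inl (Or.inr hxB)
      · exact Or.inl (Or.inl ⟨⟨hxF, hxD⟩, hxC⟩)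
  have haC := h _ (hFfin.inter_of_left D).sdiff hsA ⟨haA, hmono hF haF⟩
  exact hmono (Set.union_subset (Set.sdiff_subset.trans Set.inter_subset_right) hCD) haC

theorem of_inter_closure_subset
    (h : ∀ D : Set α, C ⊆ D → D ⊆ A ∪ C → A ∩ cl (B ∪ D) ⊆ cl D) : IndE cl A C B := by
  intro s _ hsA
  have hD := h (s ∪ C) Set.subset_union_right (Set.union_subset_union_left C hsA)
  rwa [Set.union_left_comm, ← Set.union_assoc] at hD

end IndE

theorem stmt10_general {α : Type*} (cl : Set α → Set α)
    (hmono : ∀ X Y : Set α, X ⊆ Y → cl X ⊆ cl Y)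
    (hfin : ∀ (X : Set α) (b : α), b ∈ cl X → ∃ F : Set α, F ⊆ X ∧ F.Finite ∧ b ∈ cl F) :
    ∀ A C B : Set α,
      IndE cl A C B ↔ ∀ D : Set α, C ⊆ D → D ⊆ A ∪ C → A ∩ cl (B ∪ D) ⊆ cl D :=
  fun _ _ _ => ⟨fun h _ => h.inter_closure_subset hmono hfin, IndE.of_inter_closure_subset⟩

theorem stmt10 {α : Type*} (cl : Set α → Set α)
    (hsub : ∀ X : Set α, X ⊆ cl X)
    (hmono : ∀ X Y : Set α, X ⊆ Y → cl X ⊆ cl Y)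
    (hidem : ∀ X : Set α, cl (cl X) = cl X)
    (hfin : ∀ (X : Set α) (b : α), b ∈ cl X → ∃ F : Set α, F ⊆ X ∧ F.Finite ∧ b ∈ cl F) :
    ∀ A C B : Set α,
      IndE cl A C B ↔ ∀ D : Set α, C ⊆ D → D ⊆ A ∪ C → A ∩ cl (B ∪ D) ⊆ cl D :=
  stmt10_general cl hmono hfin
end

section
/- For all sets A, B, C ⊆ α: if B ⫝M_C A then A ⫝e_C B. -/
/-- Algebraic independence: `A ⫝a_C B` iff `cl(A ∪ C) ∩ cl(B ∪ C) = cl C`. -/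
def IndA {α : Type*} (cl : Set α → Set α) (A C B : Set α) : Prop :=
  cl (A ∪ C) ∩ cl (B ∪ C) = cl C

/-- M-independence: `A ⫝M_C B` iff `A ⫝a_D B` for every `D` with `C ⊆ D ⊆ cl(B ∪ C)`. -/
def IndM {α : Type*} (cl : Set α → Set α) (A C B : Set α) : Prop :=
  ∀ D : Set α, C ⊆ D → D ⊆ cl (B ∪ C) → IndA cl A D B

theorem stmt11 {α : Type*} (cl : Set α → Set α)
    (hsub : ∀ X : Set α, X ⊆ cl X)
    (hmono : ∀ X Y : Set α, X ⊆ Y → cl X ⊆ cl Y)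
    (hidem : ∀ X : Set α, cl (cl X) = cl X)
    (hfin : ∀ (X : Set α) (b : α), b ∈ cl X → ∃ F : Set α, F ⊆ X ∧ F.Finite ∧ b ∈ cl F) :
    ∀ A B C : Set α, IndM cl B C A → IndE cl A C B := by
  intro A B C hM s _hfin hsA x hx
  have hD1 : C ⊆ cl (s ∪ C) := Set.subset_union_right.trans (hsub _)
  have hD2 : cl (s ∪ C) ⊆ cl (A ∪ C) :=
    hmono _ _ (Set.union_subset_union_left _ hsA)
  have h := hM (cl (s ∪ C)) hD1 hD2
  have hx1 : x ∈ cl (B ∪ cl (s ∪ C)) := by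
    refine hmono _ _ ?_ hx.2
    rintro y ((hy | hy) | hy)
    · exact Or.inr (hsub _ (Or.inl hy))
    · exact Or.inl hy
    · exact Or.inr (hsub _ (Or.inr hy))
  have hx2 : x ∈ cl (A ∪ cl (s ∪ C)) := hsub _ (Or.inl hx.1)
  have hxc : x ∈ cl (cl (s ∪ C)) := by
    rw [IndA] at h; rw [← h]; exact ⟨hx1, hx2⟩
  rwa [hidem] at hxc
end

section
/- The closure operator cl has the exchange property if and only if exchange independence ⫝e is symmetric, i.e., for all sets A, B, C ⊆ α, A ⫝e_C B implies B ⫝e_C A. -/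
/-- The exchange property for a closure operator. -/
def ExchangeProperty {α : Type*} (cl : Set α → Set α) : Prop :=
  ∀ (a b : α) (C : Set α), a ∈ cl (C ∪ {b}) → a ∉ cl C → b ∈ cl (C ∪ {a})

theorem stmt12 {α : Type*} (cl : Set α → Set α)
    (hsub : ∀ X : Set α, X ⊆ cl X)
    (hmono : ∀ X Y : Set α, X ⊆ Y → cl X ⊆ cl Y)
    (hidem : ∀ X : Set α, cl (cl X) = cl X)
    (hfin : ∀ (X : Set α) (b : α), b ∈ cl X → ∃ F : Set α, F ⊆ X ∧ F.Finite ∧ b ∈ cl F) :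
    ExchangeProperty cl ↔ ∀ A C B : Set α, IndE cl A C B → IndE cl B C A := by
  constructor
  · intro hE A C B hInd s hsfin hsB x hx
    obtain ⟨hxB, hxcl⟩ := hx
    obtain ⟨G, hGsub, hGfin, hxG⟩ := hfin _ _ hxcl
    have hFfin : (G ∩ A).Finite := hGfin.inter_of_left _
    have key : ∀ n : ℕ, ∀ F : Finset α, F.card = n → ↑F ⊆ A →
        x ∈ cl (↑F ∪ (s ∪ C)) → x ∈ cl (s ∪ C) := by
      intro n
      induction n with
      | zero =>
        intro F hcard hFA hxF
        have hF : F = ∅ := Finset.card_eq_zero.mp hcard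
        subst hF
        simpa using hxF
      | succ n ih =>
        classical
        intro F hcard hFA hxF
        obtain ⟨f, hf⟩ : F.Nonempty := Finset.card_pos.mp (by omega)
        set F' := F.erase f with hF'
        have hcard' : F'.card = n := by
          simp [hF', Finset.card_erase_of_mem hf, hcard]
        have hFA' : (↑F' : Set α) ⊆ A := fun y hy => hFA (Finset.erase_subset _ _ hy)
        have hsplit : (↑F : Set α) ∪ (s ∪ C) = (↑F' ∪ (s ∪ C)) ∪ {f} := by
          ext y
          simp only [Set.mem_union, Set.mem_singleton_iff, Finset.coe_erase,
            Set.mem_diff, Finset.mem_coe, hF']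
          constructor
          · rintro (hy | hy)
            · by_cases hyf : y = f
              · exact Or.inr hyf
              · exact Or.inl (Or.inl ⟨hy, hyf⟩)
            · exact Or.inl (Or.inr hy)
          · rintro ((⟨hy, _⟩ | hy) | hy)
            · exact Or.inl hy
            · exact Or.inr hy
            · exact Or.inl (hy ▸ hf)
        have hx2 : x ∈ cl (↑F' ∪ (s ∪ C)) := by
          by_cases h : x ∈ cl (↑F' ∪ (s ∪ C))
          · exact h
          · have hxe : x ∈ cl ((↑F' ∪ (s ∪ C)) ∪ {f}) := by
              rw [← hsplit]; exact hxF
            have hfx : f ∈ cl ((↑F' ∪ (s ∪ C)) ∪ {x}) := hE _ _ _ hxe h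
            have hfB : f ∈ cl (↑F' ∪ B ∪ C) := by
              refine hmono _ _ ?_ hfx
              rintro y ((hy | (hy | hy)) | hy)
              · exact Or.inl (Or.inl hy)
              · exact Or.inl (Or.inr (hsB hy))
              · exact Or.inr hy
              · exact Or.inl (Or.inr (Set.mem_singleton_iff.mp hy ▸ hxB))
            have hfC : f ∈ cl (↑F' ∪ C) :=
              hInd (↑F') (F'.finite_toSet) hFA' ⟨hFA hf, hfB⟩
            have hsubcl : ((↑F' : Set α) ∪ (s ∪ C)) ∪ {f} ⊆ cl (↑F' ∪ (s ∪ C)) := by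
              rintro y (hy | hy)
              · exact hsub _ hy
              · rw [Set.mem_singleton_iff.mp hy]
                refine hmono _ _ ?_ hfC
                rintro z (hz | hz)
                · exact Or.inl hz
                · exact Or.inr (Or.inr hz)
            have hfin2 := hmono _ _ hsubcl hxe
            rwa [hidem] at hfin2
        exact ih F' hcard' hFA' hx2
    refine key hFfin.toFinset.card hFfin.toFinset rfl ?_ ?_
    · intro y hy
      simp only [Set.Finite.coe_toFinset, Set.mem_inter_iff] at hy
      exact hy.2
    · refine hmono _ _ ?_ hxG
      intro y hy
      by_cases hyA : y ∈ A
      · exact Or.inl (by simp only [Set.Finite.coe_toFinset]; exact ⟨hy, hyA⟩)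
      · rcases hGsub hy with (hy' | hy') | hy'
        · exact Or.inr (Or.inl hy')
        · exact absurd hy' hyA
        · exact Or.inr (Or.inr hy')
  · intro hsymm a b C hab hanC
    by_contra hb
    have h1 : IndE cl {b} C {a} := by
      intro s hsfin hsb y hy
      obtain ⟨hyb, hycl⟩ := hy
      have hyb' : y = b := hyb
      by_cases hbs : b ∈ s
      · exact hsub _ (Or.inl (hyb' ▸ hbs))
      · have hs : s = ∅ := by
          ext z
          simp only [Set.mem_empty_iff_false, iff_false]
          intro hz
          exact hbs ((hsb hz : z ∈ ({b} : Set α)) ▸ hz)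
        exfalso
        apply hb
        rw [hs] at hycl
        subst hyb'
        refine hmono _ _ ?_ hycl
        rintro z ((hz | hz) | hz)
        · exact absurd hz (Set.notMem_empty z)
        · exact Or.inr hz
        · exact Or.inl hz
    have h2 : IndE cl {a} C {b} := hsymm _ _ _ h1
    have : a ∈ cl (∅ ∪ C) := by
      refine h2 ∅ Set.finite_empty (Set.empty_subset _) ⟨rfl, ?_⟩
      refine hmono _ _ ?_ hab
      rintro z (hz | hz)
      · exact Or.inr hz
      · exact Or.inl (Or.inr hz)
    exact hanC (by simpa using this)
end

section
/- Exchange independence ⫝e has the countable union property: whenever A, B, C are countable subsets of α, C = ⋃ₙ Cₙ with Cₙ ⊆ Cₙ₊₁ for all n ∈ ℕ, and A ⫝e_{Cₙ} B for each n, then A ⫝e_C B. -/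
theorem stmt13 {α : Type*} (cl : Set α → Set α)
    (hsub : ∀ X : Set α, X ⊆ cl X)
    (hmono : ∀ X Y : Set α, X ⊆ Y → cl X ⊆ cl Y)
    (hidem : ∀ X : Set α, cl (cl X) = cl X)
    (hfin : ∀ (X : Set α) (b : α), b ∈ cl X → ∃ F : Set α, F ⊆ X ∧ F.Finite ∧ b ∈ cl F) :
    ∀ A B : Set α, A.Countable → B.Countable →
      ∀ C : ℕ → Set α, (⋃ n, C n).Countable → (∀ n, C n ⊆ C (n + 1)) →
        (∀ n, IndE cl A (C n) B) → IndE cl A (⋃ n, C n) B := by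
  intro A B _ _ C _ hchain hind s hsfin hsA a ⟨haA, hacl⟩
  obtain ⟨F, hFsub, hFfin, haF⟩ := hfin _ _ hacl
  -- F ∩ ⋃ C is finite, find N containing it
  have hmonoC : Monotone C := monotone_nat_of_le_succ hchain
  have hdir : Directed (· ⊆ ·) C := hmonoC.directed_le
  have hFi : (F ∩ ⋃ n, C n).Finite := hFfin.inter_of_left _
  obtain ⟨N, hN⟩ := hdir.exists_mem_subset_of_finset_subset_biUnion
    (s := hFi.toFinset) (by simpa using Set.inter_subset_right)
  rw [Set.Finite.coe_toFinset] at hN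
  have hFN : F ⊆ s ∪ B ∪ C N := by
    intro x hx
    rcases hFsub hx with h | h
    · exact Or.inl h
    · exact Or.inr (hN ⟨hx, h⟩)
  have : a ∈ cl (s ∪ B ∪ C N) := hmono _ _ hFN haF
  have h1 : a ∈ cl (s ∪ C N) := hind N s hsfin hsA ⟨haA, this⟩
  exact hmono _ _ (Set.union_subset_union_right s (Set.subset_iUnion C N)) h1
end

section
/- If the closure operator cl has the exchange property, then exchange independence ⫝e is countably based: for all A, B, C ⊆ α, A ⫝e_C B holds if and only if for all countable A' ⊆ A, B' ⊆ B, C' ⊆ C there is a countable D with C' ⊆ D ⊆ C and A' ⫝e_D B'. -/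
theorem stmt14 {α : Type*} (cl : Set α → Set α)
    (hsub : ∀ X : Set α, X ⊆ cl X)
    (hmono : ∀ X Y : Set α, X ⊆ Y → cl X ⊆ cl Y)
    (hidem : ∀ X : Set α, cl (cl X) = cl X)
    (hfin : ∀ (X : Set α) (b : α), b ∈ cl X → ∃ F : Set α, F ⊆ X ∧ F.Finite ∧ b ∈ cl F)
    (hexch : ExchangeProperty cl) :
    ∀ A C B : Set α, IndE cl A C B ↔
      ∀ A' B' C' : Set α, A'.Countable → B'.Countable → C'.Countable →
        A' ⊆ A → B' ⊆ B → C' ⊆ C →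
        ∃ D : Set α, D.Countable ∧ C' ⊆ D ∧ D ⊆ C ∧ IndE cl A' D B' := by
  intro A C B
  constructor
  · -- forward direction
    intro hI A' B' C' hA'c hB'c hC'c hA'A hB'B hC'C
    have key : ∀ (s : Set α) (a : α), ∃ F : Set α, F.Finite ∧ F ⊆ C ∧
        (a ∈ cl (s ∪ C) → a ∈ cl (s ∪ F)) := by
      intro s a
      by_cases h : a ∈ cl (s ∪ C)
      · obtain ⟨F', hF'sub, hF'fin, haF'⟩ := hfin _ _ h
        refine ⟨F' ∩ C, hF'fin.inter_of_left _, Set.inter_subset_right, fun _ => ?_⟩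
        refine hmono _ _ ?_ haF'
        intro x hx
        rcases hF'sub hx with hxs | hxC
        · exact Or.inl hxs
        · exact Or.inr ⟨hx, hxC⟩
      · exact ⟨∅, Set.finite_empty, Set.empty_subset _, fun h' => absurd h' h⟩
    choose F hFfin hFC hF using key
    set D : Set α := C' ∪ ⋃ s ∈ {t : Set α | t.Finite ∧ t ⊆ A'}, ⋃ a ∈ A', F s a with hD
    have hDC : D ⊆ C := by
      intro x hx
      rcases hx with hx | hx
      · exact hC'C hx
      · simp only [Set.mem_iUnion] at hx
        obtain ⟨s, _, a, _, hx⟩ := hx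
        exact hFC s a hx
    refine ⟨D, ?_, Set.subset_union_left, hDC, ?_⟩
    · refine Set.Countable.union hC'c ?_
      refine Set.Countable.biUnion ?_ fun s _ =>
        Set.Countable.biUnion hA'c fun a _ => (hFfin s a).countable
      exact Set.countable_setOf_finite_subset hA'c
    · rintro s hsfin hsA' a ⟨haA', hacl⟩
      have h1 : a ∈ cl (s ∪ C) := by
        refine hI s hsfin (hsA'.trans hA'A) ⟨hA'A haA', ?_⟩
        refine hmono _ _ ?_ hacl
        intro x hx
        rcases hx with (hx | hx) | hx
        · exact Or.inl (Or.inl hx)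
        · exact Or.inl (Or.inr (hB'B hx))
        · exact Or.inr (hDC hx)
      have h2 : a ∈ cl (s ∪ F s a) := hF s a h1
      refine hmono _ _ ?_ h2
      intro x hx
      rcases hx with hx | hx
      · exact Or.inl hx
      · refine Or.inr (Or.inr ?_)
        simp only [Set.mem_iUnion]
        exact ⟨s, ⟨hsfin, hsA'⟩, a, haA', hx⟩
  · -- backward direction
    intro h s hsfin hsA a ⟨haA, hacl⟩
    obtain ⟨G, hGsub, hGfin, haG⟩ := hfin _ _ hacl
    obtain ⟨D, hDc, hC'D, hDC, hInd⟩ :=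
      h (insert a s) (G ∩ B) (G ∩ C) (hsfin.insert a).countable
        (hGfin.inter_of_left _).countable (hGfin.inter_of_left _).countable
        (Set.insert_subset haA hsA) Set.inter_subset_right Set.inter_subset_right
    have h2 : a ∈ cl (s ∪ (G ∩ B) ∪ D) := by
      refine hmono _ _ ?_ haG
      intro x hx
      rcases hGsub hx with (hxs | hxB) | hxC
      · exact Or.inl (Or.inl hxs)
      · exact Or.inl (Or.inr ⟨hx, hxB⟩)
      · exact Or.inr (hC'D ⟨hx, hxC⟩)
    have h3 : a ∈ cl (s ∪ D) :=
      hInd s hsfin (Set.subset_insert a s) ⟨Set.mem_insert a s, h2⟩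
    exact hmono _ _ (Set.union_subset_union_right s hDC) h3
end

section
/- For all countable subsets A, B, C of 𝓛, the set {ω ∈ Ω : A(ω) ⫝c_{C(ω)} B(ω)} is measurable, where ⫝c denotes covering independence in the structure M. -/
open FirstOrder

/-- Covering independence: `A ⫝c_C B` ("`C` covers `A` in `B`") in the `L`-structure `M`. -/
def IndC (L : Language) (M : Type*) [L.Structure M] (A C B : Set M) : Prop :=
  ∀ (k m n : ℕ) (φ : L.Formula (Fin k ⊕ Fin m ⊕ Fin n))
    (a : Fin k → M) (b : Fin m → M) (c : Fin n → M),
    (∀ i, a i ∈ A) → (∀ i, b i ∈ B) → (∀ i, c i ∈ C) →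
    ∃ d : Fin m → M, (∀ i, d i ∈ C) ∧
      (φ.Realize (Sum.elim a (Sum.elim b c)) → φ.Realize (Sum.elim a (Sum.elim d c)))

lemma countable_boundedFormula (L : Language) [Countable L.Symbols] (α : Type*) [Countable α]
    (n : ℕ) : Countable (L.BoundedFormula α n) := by
  haveI : Countable (Σ n, L.Relations n) :=
    (Sum.inr_injective (α := Σ l, L.Functions l)).countable
  haveI : Countable (Σ n, L.BoundedFormula α n) :=
    Language.BoundedFormula.listEncode_sigma_injective.countable
  exact (sigma_mk_injective (i := n)).countable

theorem stmt17 (L : Language) [Countable L.Symbols] (M : Type*) [L.Structure M]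
    (Ω : Type*) [MeasurableSpace Ω] (𝓛 : Set (Ω → M))
    (hmeas : ∀ (n : ℕ) (φ : L.Formula (Fin n)) (a : Fin n → Ω → M),
      (∀ i, a i ∈ 𝓛) → MeasurableSet {ω : Ω | φ.Realize (fun i => a i ω)}) :
    ∀ A B C : Set (Ω → M), A ⊆ 𝓛 → B ⊆ 𝓛 → C ⊆ 𝓛 →
      A.Countable → B.Countable → C.Countable →
      MeasurableSet {ω : Ω |
        IndC L M ((fun f => f ω) '' A) ((fun f => f ω) '' C) ((fun f => f ω) '' B)} := by
  intro A B C hA𝓛 hB𝓛 hC𝓛 hA hB hC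
  haveI := hA.to_subtype
  haveI := hB.to_subtype
  haveI := hC.to_subtype
  have hset : {ω : Ω |
      IndC L M ((fun f => f ω) '' A) ((fun f => f ω) '' C) ((fun f => f ω) '' B)} =
    ⋂ (k : ℕ), ⋂ (m : ℕ), ⋂ (n : ℕ), ⋂ (φ : L.Formula (Fin k ⊕ Fin m ⊕ Fin n)),
      ⋂ (a : Fin k → A), ⋂ (b : Fin m → B), ⋂ (c : Fin n → C), ⋃ (d : Fin m → C),
        {ω : Ω | φ.Realize (Sum.elim (fun i => (a i : Ω → M) ω)
            (Sum.elim (fun i => (b i : Ω → M) ω) (fun i => (c i : Ω → M) ω))) →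
          φ.Realize (Sum.elim (fun i => (a i : Ω → M) ω)
            (Sum.elim (fun i => (d i : Ω → M) ω) (fun i => (c i : Ω → M) ω)))} := by
    ext ω
    simp only [Set.mem_setOf_eq, Set.mem_iInter, Set.mem_iUnion]
    constructor
    · intro h k m n φ a b c
      obtain ⟨d, hd, himp⟩ := h k m n φ (fun i => (a i : Ω → M) ω) (fun i => (b i : Ω → M) ω)
        (fun i => (c i : Ω → M) ω)
        (fun i => Set.mem_image_of_mem _ (a i).2)
        (fun i => Set.mem_image_of_mem _ (b i).2)
        (fun i => Set.mem_image_of_mem _ (c i).2)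
      choose f hfC hfval using hd
      refine ⟨fun i => ⟨f i, hfC i⟩, fun h1 => ?_⟩
      simpa [show (fun i => f i ω) = d from funext hfval] using himp h1
    · intro h k m n φ a b c ha hb hc
      choose a' haA haω using ha
      choose b' hbB hbω using hb
      choose c' hcC hcω using hc
      obtain ⟨d, hd⟩ := h k m n φ (fun i => ⟨a' i, haA i⟩) (fun i => ⟨b' i, hbB i⟩)
        (fun i => ⟨c' i, hcC i⟩)
      refine ⟨fun i => (d i : Ω → M) ω, fun i => Set.mem_image_of_mem _ (d i).2, fun h1 => ?_⟩
      have ea : (fun i => a' i ω) = a := funext haω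
      have eb : (fun i => b' i ω) = b := funext hbω
      have ec : (fun i => c' i ω) = c := funext hcω
      rw [← ea, ← ec]
      apply hd
      rw [ea, eb, ec]
      exact h1
  rw [hset]
  haveI : ∀ k m n : ℕ, Countable (L.Formula (Fin k ⊕ Fin m ⊕ Fin n)) :=
    fun k m n => countable_boundedFormula L _ 0
  refine MeasurableSet.iInter fun k => MeasurableSet.iInter fun m =>
    MeasurableSet.iInter fun n => MeasurableSet.iInter fun φ =>
    MeasurableSet.iInter fun a => MeasurableSet.iInter fun b =>
    MeasurableSet.iInter fun c => MeasurableSet.iUnion fun d => ?_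
  -- encode as a single formula over `Fin (k + (m + (n + m)))`
  let e : (Fin k ⊕ (Fin m ⊕ (Fin n ⊕ Fin m))) ≃ Fin (k + (m + (n + m))) :=
    ((Equiv.refl (Fin k)).sumCongr (((Equiv.refl (Fin m)).sumCongr finSumFinEquiv).trans
      finSumFinEquiv)).trans finSumFinEquiv
  let inj1 : (Fin k ⊕ Fin m ⊕ Fin n) → (Fin k ⊕ (Fin m ⊕ (Fin n ⊕ Fin m))) :=
    Sum.elim Sum.inl (Sum.elim (fun i => Sum.inr (Sum.inl i))
      (fun i => Sum.inr (Sum.inr (Sum.inl i))))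
  let inj2 : (Fin k ⊕ Fin m ⊕ Fin n) → (Fin k ⊕ (Fin m ⊕ (Fin n ⊕ Fin m))) :=
    Sum.elim Sum.inl (Sum.elim (fun i => Sum.inr (Sum.inr (Sum.inr i)))
      (fun i => Sum.inr (Sum.inr (Sum.inl i))))
  let ψ : L.Formula (Fin (k + (m + (n + m)))) :=
    (φ.relabel (fun x => e (inj1 x))).imp (φ.relabel (fun x => e (inj2 x)))
  let g : Fin (k + (m + (n + m))) → Ω → M :=
    fun i => (Sum.elim (fun i => (a i : Ω → M)) (Sum.elim (fun i => (b i : Ω → M))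
      (Sum.elim (fun i => (c i : Ω → M)) (fun i => (d i : Ω → M))))) (e.symm i)
  have hg : ∀ i, g i ∈ 𝓛 := by
    intro i
    rcases hx : e.symm i with x | x | x | x <;>
      simp only [g, hx, Sum.elim_inl, Sum.elim_inr]
    · exact hA𝓛 (a x).2
    · exact hB𝓛 (b x).2
    · exact hC𝓛 (c x).2
    · exact hC𝓛 (d x).2
  have key : {ω : Ω | φ.Realize (Sum.elim (fun i => (a i : Ω → M) ω)
        (Sum.elim (fun i => (b i : Ω → M) ω) (fun i => (c i : Ω → M) ω))) →
      φ.Realize (Sum.elim (fun i => (a i : Ω → M) ω)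
        (Sum.elim (fun i => (d i : Ω → M) ω) (fun i => (c i : Ω → M) ω)))} =
      {ω : Ω | ψ.Realize (fun i => g i ω)} := by
    ext ω
    simp only [Set.mem_setOf_eq, ψ, Language.Formula.realize_imp, Language.Formula.realize_relabel]
    have h1 : ((fun i => g i ω) ∘ fun x => e (inj1 x)) =
        Sum.elim (fun i => (a i : Ω → M) ω)
          (Sum.elim (fun i => (b i : Ω → M) ω) (fun i => (c i : Ω → M) ω)) := by
      funext x
      rcases x with x | x | x <;>
        simp [g, inj1]
    have h2 : ((fun i => g i ω) ∘ fun x => e (inj2 x)) =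
        Sum.elim (fun i => (a i : Ω → M) ω)
          (Sum.elim (fun i => (d i : Ω → M) ω) (fun i => (c i : Ω → M) ω)) := by
      funext x
      rcases x with x | x | x <;>
        simp [g, inj2]
    rw [h1, h2]
  rw [key]
  exact hmeas _ ψ g hg
end

section
/- Pointwise covering independence has small local character: for all subsets A, B of 𝓛 and every C₀ ⊆ B with #C₀ ≤ #A + ℵ₀, there exists a set C with C₀ ⊆ C ⊆ B and #C ≤ #A + ℵ₀ such that for all countable A₀ ⊆ A, B₀ ⊆ B, and C' ⊆ C, there is a countable C'' with C' ⊆ C'' ⊆ C and μ({ω ∈ Ω : A₀(ω) ⫝c_{C''(ω)} B₀(ω)}) = 1, where ⫝c denotes covering independence in the structure M. -/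
open FirstOrder Cardinal

section Aux

open Set MeasureTheory
open scoped ENNReal

universe u

/-- A countable subfamily of a family of measurable sets whose union essentially covers
every member of the family. -/
theorem essChoice {Ω : Type*} [MeasurableSpace Ω] (μ : Measure Ω)
    [IsProbabilityMeasure μ] {ι : Type*} (S : ι → Set Ω)
    (hS : ∀ i, MeasurableSet (S i)) :
    ∃ T : Set ι, T.Countable ∧ ∀ i, μ (S i \ ⋃ j ∈ T, S j) = 0 := by
  classical
  set F : {T : Set ι // T.Countable} → ℝ≥0∞ := fun T => μ (⋃ j ∈ T.1, S j) with hF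
  obtain ⟨u, hu_mono, hu_tendsto, hu_mem⟩ :=
    exists_seq_tendsto_sSup (S := Set.range F) ⟨F ⟨∅, countable_empty⟩, Set.mem_range_self _⟩
      (OrderTop.bddAbove _)
  choose Ts hTs using fun n => hu_mem n
  set T : Set ι := ⋃ n, (Ts n).1 with hT
  have hTc : T.Countable := Set.countable_iUnion fun n => (Ts n).2
  set U : Set Ω := ⋃ j ∈ T, S j with hU
  have hUmeas : MeasurableSet U := MeasurableSet.biUnion hTc fun j _ => hS j
  have hUge : sSup (Set.range F) ≤ μ U := by
    refine le_of_tendsto hu_tendsto (Filter.Eventually.of_forall fun n => ?_)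
    rw [← hTs n]
    refine measure_mono (Set.biUnion_subset_biUnion_left ?_)
    exact Set.subset_iUnion (fun n => (Ts n).1) n
  have hUle : ∀ i, μ (S i ∪ U) ≤ μ U := by
    intro i
    have h1 : μ (⋃ j ∈ insert i T, S j) ∈ Set.range F := ⟨⟨insert i T, hTc.insert i⟩, rfl⟩
    have h2 := (le_sSup h1).trans hUge
    rwa [Set.biUnion_insert] at h2
  refine ⟨T, hTc, fun i => ?_⟩
  have h2 : S i \ U = (S i ∪ U) \ U := (Set.union_diff_right).symm
  rw [h2, measure_diff Set.subset_union_right hUmeas.nullMeasurableSet (measure_ne_top μ U)]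
  exact tsub_eq_zero_iff_le.mpr (hUle i)

theorem formula_countable (L : Language) [Countable L.Symbols] (α : Type*) [Countable α] :
    Countable (L.Formula α) := by
  have h := Language.BoundedFormula.card_le (L := L) (α := α)
  have h1 : #(Σ n, L.BoundedFormula α n) ≤ ℵ₀ := by
    refine h.trans (max_le le_rfl ?_)
    refine le_trans (add_le_add (lift_le_aleph0.2 mk_le_aleph0) (lift_le_aleph0.2 mk_le_aleph0)) ?_
    simp
  have h2 : Countable (Σ n, L.BoundedFormula α n) := mk_le_aleph0_iff.mp h1
  exact (sigma_mk_injective (i := 0) (β := fun n => L.BoundedFormula α n)).countable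

theorem aux_iUnion_le {α ι : Type u} {κ : Cardinal.{u}} (hκ : ℵ₀ ≤ κ) (f : ι → Set α)
    (hι : #ι ≤ κ) (h : ∀ i, #(f i) ≤ κ) : #(⋃ i, f i) ≤ κ :=
  (mk_iUnion_le f).trans ((mul_le_mul' hι (ciSup_le' h)).trans (mul_eq_self hκ).le)

theorem aux_iUnion_nat_le {α : Type u} {κ : Cardinal.{u}} (hκ : ℵ₀ ≤ κ) (f : ℕ → Set α)
    (h : ∀ n, #(f n) ≤ κ) : #(⋃ n, f n) ≤ κ := by
  have he : (⋃ n, f n) = ⋃ n : ULift.{u} ℕ, f n.down := by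
    ext x
    simp only [Set.mem_iUnion]
    exact ⟨fun ⟨n, hx⟩ => ⟨⟨n⟩, hx⟩, fun ⟨n, hx⟩ => ⟨n.down, hx⟩⟩
  rw [he]
  exact aux_iUnion_le hκ _ (mk_le_aleph0.trans hκ) fun n => h n.down

theorem tuple_card_le {α : Type u} {κ : Cardinal.{u}} (hκ : ℵ₀ ≤ κ) {s : Set α}
    (hs : #s ≤ κ) (k : ℕ) : #{f : Fin k → α // ∀ i, f i ∈ s} ≤ κ := by
  have e : {f : Fin k → α // ∀ i, f i ∈ s} ≃ (Fin k → s) := Equiv.subtypePiEquivPi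
  rw [Cardinal.mk_congr e, Cardinal.mk_arrow]
  simp only [Cardinal.mk_fin, Cardinal.lift_natCast, Cardinal.lift_uzero]
  calc (#s) ^ (k : Cardinal.{u}) ≤ κ ^ (k : Cardinal.{u}) := power_le_power_right hs
    _ ≤ κ := pow_le hκ (nat_lt_aleph0 k)

theorem countable_tuple {α : Type*} {s : Set α} (hs : s.Countable) (k : ℕ) :
    Countable {f : Fin k → α // ∀ i, f i ∈ s} := by
  haveI := hs.to_subtype
  exact (Equiv.subtypePiEquivPi (p := fun _ x => x ∈ s)).injective.countable

/-- The event that a formula holds for the given tuples of random elements. -/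
def Ev (L : Language) {M : Type*} [L.Structure M] {Ω : Type*} {k m n : ℕ}
    (φ : L.Formula (Fin k ⊕ Fin m ⊕ Fin n)) (a : Fin k → Ω → M) (b : Fin m → Ω → M)
    (c : Fin n → Ω → M) : Set Ω :=
  {ω | φ.Realize (Sum.elim (fun i => a i ω) (Sum.elim (fun i => b i ω) (fun i => c i ω)))}

theorem elim_eval {M Ω : Type*} {k m n : ℕ} (a : Fin k → Ω → M) (b : Fin m → Ω → M)
    (c : Fin n → Ω → M) (ω : Ω) (a' : Fin k → M) (b' : Fin m → M) (c' : Fin n → M)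
    (ha : ∀ i, a i ω = a' i) (hb : ∀ i, b i ω = b' i) (hc : ∀ i, c i ω = c' i) :
    Sum.elim (fun i => a i ω) (Sum.elim (fun i => b i ω) (fun i => c i ω)) =
      Sum.elim a' (Sum.elim b' c') := by
  funext x
  rcases x with i | i | i <;> simp [ha, hb, hc]

theorem meas_event {L : Language} {M : Type*} [L.Structure M] {Ω : Type*} [MeasurableSpace Ω]
    (𝓛 : Set (Ω → M))
    (hmeas : ∀ (n : ℕ) (φ : L.Formula (Fin n)) (a : Fin n → Ω → M),
      (∀ i, a i ∈ 𝓛) → MeasurableSet {ω : Ω | φ.Realize (fun i => a i ω)})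
    {k m n : ℕ} (φ : L.Formula (Fin k ⊕ Fin m ⊕ Fin n))
    (a : Fin k → Ω → M) (b : Fin m → Ω → M) (c : Fin n → Ω → M)
    (ha : ∀ i, a i ∈ 𝓛) (hb : ∀ i, b i ∈ 𝓛) (hc : ∀ i, c i ∈ 𝓛) :
    MeasurableSet (Ev L φ a b c) := by
  classical
  let e : (Fin k ⊕ Fin m ⊕ Fin n) ≃ Fin (k + (m + n)) :=
    (Equiv.sumCongr (Equiv.refl _) finSumFinEquiv).trans finSumFinEquiv
  have hL : ∀ x : Fin k ⊕ Fin m ⊕ Fin n, Sum.elim a (Sum.elim b c) x ∈ 𝓛 := by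
    rintro (i | i | i)
    exacts [ha i, hb i, hc i]
  have key : Ev L φ a b c =
      {ω | (φ.relabel e).Realize fun i => Sum.elim a (Sum.elim b c) (e.symm i) ω} := by
    ext ω
    rw [Ev, Set.mem_setOf_eq, Set.mem_setOf_eq, Language.Formula.realize_relabel]
    have h : ((fun i => Sum.elim a (Sum.elim b c) (e.symm i) ω) ∘ ⇑e) =
        Sum.elim (fun i => a i ω) (Sum.elim (fun i => b i ω) (fun i => c i ω)) := by
      funext x
      simp only [Function.comp_apply, Equiv.symm_apply_apply]
      rcases x with i | i | i <;> rfl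
    rw [h]
  rw [key]
  exact hmeas _ _ _ fun i => hL (e.symm i)

/-- Iterated closure stages. -/
def stages {α : Type*} (C₀ : Set α) (F : Set α → Set α) : ℕ → Set α
  | 0 => C₀
  | N + 1 => stages C₀ F N ∪ F (stages C₀ F N)

theorem stages_zero {α : Type*} (C₀ : Set α) (F : Set α → Set α) : stages C₀ F 0 = C₀ := rfl

theorem stages_succ {α : Type*} (C₀ : Set α) (F : Set α → Set α) (N : ℕ) :
    stages C₀ F (N + 1) = stages C₀ F N ∪ F (stages C₀ F N) := rfl

theorem stages_mono {α : Type*} (C₀ : Set α) (F : Set α → Set α) :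
    Monotone (stages C₀ F) :=
  monotone_nat_of_le_succ fun _ => Set.subset_union_left

theorem exists_stage {α : Type*} {n : ℕ} (c : Fin n → α) (D : ℕ → Set α)
    (hD : Monotone D) (hc : ∀ i, c i ∈ ⋃ N, D N) : ∃ N, ∀ i, c i ∈ D N := by
  choose g hg using fun i => Set.mem_iUnion.mp (hc i)
  exact ⟨Finset.univ.sup g, fun i => hD (Finset.le_sup (Finset.mem_univ i)) (hg i)⟩

end Aux

theorem stmt19 (L : Language) [Countable L.Symbols] (M : Type*) [L.Structure M]
    (Ω : Type*) [MeasurableSpace Ω] (μ : MeasureTheory.Measure Ω)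
    [MeasureTheory.IsProbabilityMeasure μ] (𝓛 : Set (Ω → M))
    (hmeas : ∀ (n : ℕ) (φ : L.Formula (Fin n)) (a : Fin n → Ω → M),
      (∀ i, a i ∈ 𝓛) → MeasurableSet {ω : Ω | φ.Realize (fun i => a i ω)}) :
    ∀ A B C₀ : Set (Ω → M), A ⊆ 𝓛 → B ⊆ 𝓛 → C₀ ⊆ B → #C₀ ≤ #A + ℵ₀ →
      ∃ C : Set (Ω → M), C₀ ⊆ C ∧ C ⊆ B ∧ #C ≤ #A + ℵ₀ ∧
        ∀ A₀ B₀ C' : Set (Ω → M), A₀.Countable → B₀.Countable → C'.Countable →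
          A₀ ⊆ A → B₀ ⊆ B → C' ⊆ C →
          ∃ C'' : Set (Ω → M), C''.Countable ∧ C' ⊆ C'' ∧ C'' ⊆ C ∧
            μ {ω : Ω | IndC L M ((fun f => f ω) '' A₀)
                ((fun f => f ω) '' C'') ((fun f => f ω) '' B₀)} = 1 := by
  classical
  intro A B C₀ hA hB hC₀B hC₀card
  set κ : Cardinal := #A + ℵ₀ with hκdef
  have hκ : ℵ₀ ≤ κ := le_add_self
  have hAκ : #A ≤ κ := self_le_add_right _ _
  -- enumeration of formulas
  have hsurj : ∀ k m n : ℕ, ∃ f : ℕ → L.Formula (Fin k ⊕ Fin m ⊕ Fin n),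
      Function.Surjective f := by
    intro k m n
    haveI : Countable (L.Formula (Fin k ⊕ Fin m ⊕ Fin n)) := formula_countable L _
    haveI : Nonempty (L.Formula (Fin k ⊕ Fin m ⊕ Fin n)) := ⟨⊥⟩
    exact exists_surjective_nat _
  choose phi hphi using hsurj
  -- witness sets
  have hpick : ∀ (k m n j : ℕ) (a : Fin k → Ω → M) (c : Fin n → Ω → M),
      ∃ T : Set {d : Fin m → Ω → M // ∀ i, d i ∈ B}, T.Countable ∧
        ((∀ i, a i ∈ A) → (∀ i, c i ∈ B) →
          ∀ b : Fin m → Ω → M, (∀ i, b i ∈ B) →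
            μ (Ev L (phi k m n j) a b c \ ⋃ d ∈ T, Ev L (phi k m n j) a d.1 c) = 0) := by
    intro k m n j a c
    by_cases h : (∀ i, a i ∈ A) ∧ (∀ i, c i ∈ B)
    · obtain ⟨T, hTc, hT0⟩ := essChoice μ
        (fun d : {d : Fin m → Ω → M // ∀ i, d i ∈ B} => Ev L (phi k m n j) a d.1 c)
        (fun d => meas_event 𝓛 hmeas _ a d.1 c (fun i => hA (h.1 i)) (fun i => hB (d.2 i))
          (fun i => hB (h.2 i)))
      exact ⟨T, hTc, fun _ _ b hb => hT0 ⟨b, hb⟩⟩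
    · exact ⟨∅, Set.countable_empty, fun h1 h2 => absurd ⟨h1, h2⟩ h⟩
  choose T hTc hT0 using hpick
  -- the closure operator
  set F : Set (Ω → M) → Set (Ω → M) := fun prev =>
    ⋃ (k : ℕ) (m : ℕ) (n : ℕ) (j : ℕ) (a : {a : Fin k → Ω → M // ∀ i, a i ∈ A})
      (c : {c : Fin n → Ω → M // ∀ i, c i ∈ prev}),
      ⋃ d ∈ T k m n j a.1 c.1, Set.range d.1 with hFdef
  set Cs : ℕ → Set (Ω → M) := stages C₀ F with hCsdef
  set C : Set (Ω → M) := ⋃ N, Cs N with hCdef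
  have hCsSucc : ∀ N, Cs (N + 1) = Cs N ∪ F (Cs N) := fun N => rfl
  -- C is contained in B
  have hFB : ∀ prev, F prev ⊆ B := by
    intro prev x hx
    simp only [hFdef, Set.mem_iUnion, Set.mem_range] at hx
    obtain ⟨k, m, n, j, a, c, d, hd, i, rfl⟩ := hx
    exact d.2 i
  have hCsB : ∀ N, Cs N ⊆ B := by
    intro N
    induction N with
    | zero => exact hC₀B
    | succ N ih =>
      rw [hCsSucc N]
      exact Set.union_subset ih (hFB _)
  have hCB : C ⊆ B := Set.iUnion_subset hCsB
  have hC₀C : C₀ ⊆ C := le_trans (le_of_eq rfl) (Set.subset_iUnion Cs 0)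
  -- cardinality of C
  have hElemsCard : ∀ (k m n j : ℕ) (a : Fin k → Ω → M) (c : Fin n → Ω → M),
      #(⋃ d ∈ T k m n j a c, Set.range d.1) ≤ κ := by
    intro k m n j a c
    refine le_trans (Cardinal.mk_le_aleph0_iff.mpr ?_) hκ
    rw [Set.countable_coe_iff]
    exact Set.Countable.biUnion (hTc k m n j a c) fun d _ => (Set.finite_range _).countable
  have hFcard : ∀ prev : Set (Ω → M), #prev ≤ κ → #(F prev) ≤ κ := by
    intro prev hprev
    rw [hFdef]
    refine aux_iUnion_nat_le hκ _ fun k => ?_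
    refine aux_iUnion_nat_le hκ _ fun m => ?_
    refine aux_iUnion_nat_le hκ _ fun n => ?_
    refine aux_iUnion_nat_le hκ _ fun j => ?_
    refine aux_iUnion_le hκ _ (tuple_card_le hκ hAκ k) fun a => ?_
    refine aux_iUnion_le hκ _ (tuple_card_le hκ hprev n) fun c => ?_
    exact hElemsCard k m n j a.1 c.1
  have hCscard : ∀ N, #(Cs N) ≤ κ := by
    intro N
    induction N with
    | zero => exact hC₀card
    | succ N ih =>
      rw [hCsSucc N]
      refine le_trans (Cardinal.mk_union_le _ _) ?_
      refine le_trans (add_le_add ih (hFcard _ ih)) ?_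
      exact (Cardinal.add_eq_self hκ).le
  have hCcard : #C ≤ κ := aux_iUnion_nat_le hκ _ hCscard
  -- closure property of C
  have hclose : ∀ (k m n j : ℕ) (a : Fin k → Ω → M) (c : Fin n → Ω → M),
      (∀ i, a i ∈ A) → (∀ i, c i ∈ C) →
      (⋃ d ∈ T k m n j a c, Set.range d.1) ⊆ C := by
    intro k m n j a c ha hc
    obtain ⟨N, hN⟩ := exists_stage c Cs (by rw [hCsdef]; exact stages_mono _ _) hc
    intro x hx
    have hxF : x ∈ F (Cs N) := by
      simp only [hFdef, Set.mem_iUnion]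
      simp only [Set.mem_iUnion] at hx
      obtain ⟨d, hd, hxx⟩ := hx
      exact ⟨k, m, n, j, ⟨a, ha⟩, ⟨c, hN⟩, d, hd, hxx⟩
    have hxCs : x ∈ Cs (N + 1) := by
      rw [hCsSucc N]
      exact Set.mem_union_right _ hxF
    exact Set.mem_iUnion.mpr ⟨N + 1, hxCs⟩
  refine ⟨C, hC₀C, hCB, hCcard, ?_⟩
  -- second part
  intro A₀ B₀ C' hA₀c hB₀c hC'c hA₀A hB₀B hC'C
  set G : Set (Ω → M) → Set (Ω → M) := fun prev =>
    ⋃ (k : ℕ) (m : ℕ) (n : ℕ) (j : ℕ) (a : {a : Fin k → Ω → M // ∀ i, a i ∈ A₀})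
      (c : {c : Fin n → Ω → M // ∀ i, c i ∈ prev}),
      ⋃ d ∈ T k m n j a.1 c.1, Set.range d.1 with hGdef
  set Ds : ℕ → Set (Ω → M) := stages C' G with hDsdef
  set C'' : Set (Ω → M) := ⋃ N, Ds N with hC''def
  have hDsSucc : ∀ N, Ds (N + 1) = Ds N ∪ G (Ds N) := fun N => rfl
  -- countability
  have hGc : ∀ prev : Set (Ω → M), prev.Countable → (G prev).Countable := by
    intro prev hprev
    haveI : ∀ k : ℕ, Countable {a : Fin k → Ω → M // ∀ i, a i ∈ A₀} :=
      fun k => countable_tuple hA₀c k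
    haveI : ∀ k : ℕ, Countable {c : Fin k → Ω → M // ∀ i, c i ∈ prev} :=
      fun k => countable_tuple hprev k
    rw [hGdef]
    refine Set.countable_iUnion fun k => Set.countable_iUnion fun m =>
      Set.countable_iUnion fun n => Set.countable_iUnion fun j =>
      Set.countable_iUnion fun a => Set.countable_iUnion fun c => ?_
    exact Set.Countable.biUnion (hTc k m n j a.1 c.1) fun d _ => (Set.finite_range _).countable
  have hDsc : ∀ N, (Ds N).Countable := by
    intro N
    induction N with
    | zero => exact hC'c
    | succ N ih =>
      rw [hDsSucc N]
      exact Set.Countable.union ih (hGc _ ih)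
  have hC''c : C''.Countable := Set.countable_iUnion hDsc
  -- C'' is contained in C
  have hGC : ∀ prev, prev ⊆ C → G prev ⊆ C := by
    intro prev hprev x hx
    simp only [hGdef, Set.mem_iUnion] at hx
    obtain ⟨k, m, n, j, a, c, d, hd, hxx⟩ := hx
    exact hclose k m n j a.1 c.1 (fun i => hA₀A (a.2 i)) (fun i => hprev (c.2 i))
      (Set.mem_iUnion.mpr ⟨d, Set.mem_iUnion.mpr ⟨hd, hxx⟩⟩)
  have hDsC : ∀ N, Ds N ⊆ C := by
    intro N
    induction N with
    | zero => exact hC'C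
    | succ N ih =>
      rw [hDsSucc N]
      exact Set.union_subset ih (hGC _ ih)
  have hC''C : C'' ⊆ C := Set.iUnion_subset hDsC
  have hC'C'' : C' ⊆ C'' := le_trans (le_of_eq rfl) (Set.subset_iUnion Ds 0)
  -- closure property of C''
  have hclose'' : ∀ (k m n j : ℕ) (a : Fin k → Ω → M) (c : Fin n → Ω → M),
      (∀ i, a i ∈ A₀) → (∀ i, c i ∈ C'') →
      (⋃ d ∈ T k m n j a c, Set.range d.1) ⊆ C'' := by
    intro k m n j a c ha hc
    obtain ⟨N, hN⟩ := exists_stage c Ds (by rw [hDsdef]; exact stages_mono _ _) hc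
    intro x hx
    have hxG : x ∈ G (Ds N) := by
      simp only [hGdef, Set.mem_iUnion]
      simp only [Set.mem_iUnion] at hx
      obtain ⟨d, hd, hxx⟩ := hx
      exact ⟨k, m, n, j, ⟨a, ha⟩, ⟨c, hN⟩, d, hd, hxx⟩
    have hxDs : x ∈ Ds (N + 1) := by
      rw [hDsSucc N]
      exact Set.mem_union_right _ hxG
    exact Set.mem_iUnion.mpr ⟨N + 1, hxDs⟩
  refine ⟨C'', hC''c, hC'C'', hC''C, ?_⟩
  -- the bad (null) set
  set Bad : Set Ω := ⋃ (k : ℕ) (m : ℕ) (n : ℕ) (j : ℕ)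
      (a : {a : Fin k → Ω → M // ∀ i, a i ∈ A₀}) (b : {b : Fin m → Ω → M // ∀ i, b i ∈ B₀})
      (c : {c : Fin n → Ω → M // ∀ i, c i ∈ C''}),
      (Ev L (phi k m n j) a.1 b.1 c.1 \
        ⋃ d ∈ T k m n j a.1 c.1, Ev L (phi k m n j) a.1 d.1 c.1) with hBaddef
  have hBad0 : μ Bad = 0 := by
    rw [hBaddef]
    refine MeasureTheory.measure_iUnion_null fun k => MeasureTheory.measure_iUnion_null fun m =>
      MeasureTheory.measure_iUnion_null fun n => MeasureTheory.measure_iUnion_null fun j => ?_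
    haveI := countable_tuple hA₀c k
    haveI := countable_tuple hB₀c m
    haveI := countable_tuple hC''c n
    refine MeasureTheory.measure_iUnion_null fun a => MeasureTheory.measure_iUnion_null fun b =>
      MeasureTheory.measure_iUnion_null fun c => ?_
    exact hT0 k m n j a.1 c.1 (fun i => hA₀A (a.2 i)) (fun i => hCB (hC''C (c.2 i))) b.1
      (fun i => hB₀B (b.2 i))
  -- pointwise statement off the bad set
  have hpoint : ∀ ω, ω ∉ Bad → IndC L M ((fun f => f ω) '' A₀)
      ((fun f => f ω) '' C'') ((fun f => f ω) '' B₀) := by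
    intro ω hω k m n φ a b c ha hb hc
    choose fa hfa1 hfa2 using fun i => ha i
    choose fb hfb1 hfb2 using fun i => hb i
    choose fc hfc1 hfc2 using fun i => hc i
    have key : ∀ j : ℕ, (phi k m n j).Realize (Sum.elim a (Sum.elim b c)) →
        ∃ d : Fin m → M, (∀ i, d i ∈ (fun f => f ω) '' C'') ∧
          (phi k m n j).Realize (Sum.elim a (Sum.elim d c)) := by
      intro j hj
      have hωin : ω ∈ Ev L (phi k m n j) fa fb fc := by
        rw [Ev, Set.mem_setOf_eq, elim_eval fa fb fc ω a b c hfa2 hfb2 hfc2]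
        exact hj
      have hnot : ω ∉ Ev L (phi k m n j) fa fb fc \
          ⋃ d ∈ T k m n j fa fc, Ev L (phi k m n j) fa d.1 fc := by
        intro hmem
        refine hω ?_
        rw [hBaddef]
        simp only [Set.mem_iUnion]
        exact ⟨k, m, n, j, ⟨fa, hfa1⟩, ⟨fb, hfb1⟩, ⟨fc, hfc1⟩, hmem⟩
      have hor : ω ∈ ⋃ d ∈ T k m n j fa fc, Ev L (phi k m n j) fa d.1 fc := by
        by_contra hcon
        exact hnot ⟨hωin, hcon⟩
      simp only [Set.mem_iUnion] at hor
      obtain ⟨d, hd, hdev⟩ := hor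
      refine ⟨fun i => d.1 i ω, fun i => ?_, ?_⟩
      · have hmemC'' : d.1 i ∈ C'' :=
          hclose'' k m n j fa fc hfa1 hfc1
            (Set.mem_iUnion.mpr ⟨d, Set.mem_iUnion.mpr ⟨hd, ⟨i, rfl⟩⟩⟩)
        exact ⟨d.1 i, hmemC'', rfl⟩
      · rw [Ev, Set.mem_setOf_eq,
          elim_eval fa d.1 fc ω a (fun i => d.1 i ω) c hfa2 (fun i => rfl) hfc2] at hdev
        exact hdev
    obtain ⟨j, hjφ⟩ := hphi k m n φ
    by_cases hφ : φ.Realize (Sum.elim a (Sum.elim b c))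
    · obtain ⟨d, hd1, hd2⟩ := key j (by rw [hjφ]; exact hφ)
      refine ⟨d, hd1, fun _ => ?_⟩
      rw [← hjφ]
      exact hd2
    · obtain ⟨j', hj'⟩ := hphi k m n ⊤
      obtain ⟨d, hd1, _⟩ := key j' (by rw [hj']; exact Language.Formula.realize_top.mpr trivial)
      exact ⟨d, hd1, fun h => absurd h hφ⟩
  -- conclude
  refine le_antisymm MeasureTheory.prob_le_one ?_
  have hcover : (Set.univ : Set Ω) ⊆ Bad ∪ {ω : Ω | IndC L M ((fun f => f ω) '' A₀)
      ((fun f => f ω) '' C'') ((fun f => f ω) '' B₀)} := by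
    intro ω _
    by_cases hωB : ω ∈ Bad
    · exact Or.inl hωB
    · exact Or.inr (hpoint ω hωB)
  calc (1 : ENNReal) = μ Set.univ := (MeasureTheory.measure_univ).symm
    _ ≤ μ (Bad ∪ {ω : Ω | IndC L M ((fun f => f ω) '' A₀)
        ((fun f => f ω) '' C'') ((fun f => f ω) '' B₀)}) := MeasureTheory.measure_mono hcover
    _ ≤ μ Bad + μ {ω : Ω | IndC L M ((fun f => f ω) '' A₀)
        ((fun f => f ω) '' C'') ((fun f => f ω) '' B₀)} := MeasureTheory.measure_union_le _ _
    _ = μ {ω : Ω | IndC L M ((fun f => f ω) '' A₀)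
        ((fun f => f ω) '' C'') ((fun f => f ω) '' B₀)} := by rw [hBad0, zero_add]
end
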